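/- Let n and q be integers with n ≥ 1, 0 ≤ q ≤ n-1 and gcd(q,n) = 1. Then there exist integers m and n' with n' ≥ 1, 0 ≤ m ≤ n'-1, gcd(m,n') = 1, such that S(m,n') - q/n is an integer, where S(m,n') = 12·s(m,n') is twelve times the classical Dedekind sum. -/

import Mathlib

/-!
Writing `dedekindSum m n` through the residue moment `∑ k * (m * k % n)` and counting the lattice
points under the line `y = m x / n` gives the reciprocity law
`S m n + S n m = m / n + n / m + 1 / (m n) - 3`. Running the Euclidean algorithm through reciprocity
and the periodicity of `S` in `m` shows `S d c ≡ (a + d) / c` modulo `ℤ` whenever `a d ≡ 1 (mod c)`.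
Given `q / n`, take `a q ≡ 1 (mod n)`: then `d = (a² + 1) q - a` is inverted by `a` modulo
`c = (a² + 1) n`, and `(a + d) / c = q / n`.
-/

noncomputable def saw (x : ℚ) : ℚ := if x.den = 1 then 0 else x - ⌊x⌋ - 1/2

noncomputable def dedekindSum (m n : ℤ) : ℚ :=
  ∑ k ∈ Finset.Icc (1:ℤ) n, saw ((k : ℚ) / (n : ℚ)) * saw ((m : ℚ) * (k : ℚ) / (n : ℚ))

noncomputable def S (m n : ℤ) : ℚ := 12 * dedekindSum m n

open Finset

theorem saw_intCast (z : ℤ) : saw z = 0 := by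
  simp [saw]

theorem saw_add_intCast (x : ℚ) (z : ℤ) : saw (x + z) = saw x := by
  simp only [saw, Rat.add_intCast_den, Int.floor_add_intCast]
  push_cast
  ring_nf

theorem saw_intCast_div_of_not_dvd {a b : ℤ} (hb : 0 < b) (h : ¬ b ∣ a) :
    saw (a / b) = ((a % b : ℤ) : ℚ) / b - 1 / 2 := by
  lift b to ℕ using hb.le
  rw [saw, if_neg (by rwa [Rat.den_div_intCast_eq_one_iff _ _ (by omega)]), ← Int.fract,
    Int.cast_natCast, Int.fract_div_intCast_eq_div_intCast_mod]

theorem two_mul_sum_Ioc_id {a b : ℤ} (hab : a ≤ b) :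
    2 * ∑ k ∈ Ioc a b, k = b * (b + 1) - a * (a + 1) := by
  induction b, hab using Int.leInduction with
  | base => simp
  | succ b hab ih =>
    rw [← insert_Ioc_right_eq_Ioc_add_one hab, sum_insert (by simp), mul_add, ih]
    ring

theorem six_mul_sum_Ioc_sq {a b : ℤ} (hab : a ≤ b) :
    6 * ∑ k ∈ Ioc a b, k ^ 2 = b * (b + 1) * (2 * b + 1) - a * (a + 1) * (2 * a + 1) := by
  induction b, hab using Int.leInduction with
  | base => simp
  | succ b hab ih =>
    rw [← insert_Ioc_right_eq_Ioc_add_one hab, sum_insert (by simp), mul_add, ih]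
    ring

theorem sum_Ioc_emod_mul {M : Type*} [AddCommMonoid M] {m n : ℤ} (hn : 0 < n)
    (h : IsCoprime m n) (g : ℤ → M) :
    ∑ k ∈ Ioc 0 (n - 1), g (m * k % n) = ∑ k ∈ Ioc 0 (n - 1), g k := by
  have hnd : ∀ k ∈ Ioc 0 (n - 1), ¬ n ∣ m * k := fun k hk hdvd => by
    have := Int.le_of_dvd (mem_Ioc.1 hk).1 (h.symm.dvd_of_dvd_mul_left hdvd)
    simp only [mem_Ioc] at hk
    omega
  have hmaps : Set.MapsTo (fun k => m * k % n) (Ioc 0 (n - 1) : Set ℤ) (Ioc 0 (n - 1)) :=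
    fun k hk => by
      have := Int.emod_nonneg (m * k) hn.ne'
      have := Int.emod_lt_of_pos (m * k) hn
      have := mt Int.dvd_of_emod_eq_zero (hnd k hk)
      simp only [coe_Ioc, Set.mem_Ioc]
      omega
  have hinj : Set.InjOn (fun k => m * k % n) (Ioc 0 (n - 1) : Set ℤ) := by
    intro a ha b hb hab
    have : n ∣ a - b := h.symm.dvd_of_dvd_mul_left <| by
      rw [mul_sub]; exact Int.ModEq.dvd hab.symm
    simp only [coe_Ioc, Set.mem_Ioc] at ha hb
    have := Int.eq_zero_of_abs_lt_dvd this (by rw [abs_lt]; omega)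
    omega
  exact sum_nbij (fun k => m * k % n) (fun k hk => mem_coe.1 (hmaps hk)) hinj
    ((Set.toFinite _).injOn_iff_bijOn_of_mapsTo hmaps |>.1 hinj).surjOn fun _ _ => rfl

noncomputable def residueMoment (m n : ℤ) : ℤ := ∑ k ∈ Ioc 0 (n - 1), k * (m * k % n)

theorem dedekindSum_eq_residueMoment {m n : ℤ} (hn : 0 < n) (h : IsCoprime m n) :
    dedekindSum m n = residueMoment m n / n ^ 2 - (n - 1) / 4 := by
  have hnq : (n : ℚ) ≠ 0 := by exact_mod_cast hn.ne'
  have hnum : ∑ k ∈ Ioc 0 (n - 1),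
      (4 * (k * (m * k % n)) - 2 * n * k - 2 * n * (m * k % n) + n ^ 2)
        = 4 * residueMoment m n - n ^ 2 * (n - 1) := by
    have hid := two_mul_sum_Ioc_id (show 0 ≤ n - 1 by omega)
    have hres : ∑ k ∈ Ioc 0 (n - 1), m * k % n = ∑ k ∈ Ioc 0 (n - 1), k :=
      sum_Ioc_emod_mul hn h (fun x => x)
    have hcard : ((n - 1 - 0).toNat : ℤ) = n - 1 := by omega
    simp only [sum_add_distrib, sum_sub_distrib, mul_assoc, ← mul_sum, sum_const, Int.card_Ioc,
      nsmul_eq_mul, hres, hcard, residueMoment]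
    rw [← mul_sum]
    linear_combination (-2 * n) * hid
  have hIcc : Icc 1 n = insert n (Ioc 0 (n - 1)) := by
    ext x; simp only [mem_Icc, mem_insert, mem_Ioc]; omega
  have hterm : ∀ k ∈ Ioc 0 (n - 1), saw ((k : ℚ) / n) * saw ((m : ℚ) * k / n)
      = ((4 * (k * (m * k % n)) - 2 * n * k - 2 * n * (m * k % n) + n ^ 2 : ℤ) : ℚ)
        / (4 * n ^ 2) := by
    intro k hk
    simp only [mem_Ioc] at hk
    have hk' : ¬ n ∣ k := fun hd => by have := Int.le_of_dvd hk.1 hd; omega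
    rw [saw_intCast_div_of_not_dvd hn hk', Int.emod_eq_of_lt (by omega) (by omega),
      show (m : ℚ) * k = ((m * k : ℤ) : ℚ) by push_cast; ring,
      saw_intCast_div_of_not_dvd hn (fun hd => hk' (h.symm.dvd_of_dvd_mul_left hd))]
    field_simp
    push_cast
    ring
  rw [dedekindSum, hIcc, sum_insert (by simp), div_self hnq, ← Int.cast_one, saw_intCast,
    zero_mul, zero_add, sum_congr rfl hterm, ← sum_div, ← Int.cast_sum,
    hnum]
  field_simp
  push_cast
  ring

theorem residueMoment_add_mul_sum_mul_ediv (m n : ℤ) :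
    residueMoment m n + n * ∑ k ∈ Ioc 0 (n - 1), k * (m * k / n)
      = m * ∑ k ∈ Ioc 0 (n - 1), k ^ 2 := by
  rw [residueMoment, mul_sum, mul_sum, ← sum_add_distrib]
  exact sum_congr rfl fun k _ => by linear_combination k * Int.mul_ediv_add_emod (m * k) n

theorem two_mul_sum_mul_ediv_add_sum {m n : ℤ} (hm : 0 < m) (hn : 0 < n) (h : IsCoprime m n) :
    2 * ∑ k ∈ Ioc 0 (n - 1), k * (m * k / n) + ∑ j ∈ Ioc 0 (m - 1), n * j / m * (n * j / m + 1)
      = (m - 1) * ((n - 1) * n) := by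
  -- sum `k` over the lattice points `(k, j)` with `j * n ≤ m * k`, first by `k`, then by `j`
  have hcount : ∀ k ∈ Ioc 0 (n - 1),
      k * (m * k / n) = ∑ j ∈ Ioc 0 (m - 1), if j * n ≤ m * k then k else 0 := by
    intro k hk
    simp only [mem_Ioc] at hk
    have hfloor : m * k / n < m := Int.ediv_lt_of_lt_mul hn (by nlinarith)
    have hfilter : (Ioc 0 (m - 1)).filter (fun j => j * n ≤ m * k) = Ioc 0 (m * k / n) := by
      ext j
      simp only [mem_filter, mem_Ioc, ← Int.le_ediv_iff_mul_le hn]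
      omega
    rw [← sum_filter, hfilter, sum_const, Int.card_Ioc, nsmul_eq_mul, mul_comm]
    have : 0 ≤ m * k / n := Int.ediv_nonneg (by nlinarith) hn.le
    congr 1
    omega
  have hcolumn : ∀ j ∈ Ioc 0 (m - 1),
      2 * ∑ k ∈ Ioc 0 (n - 1), (if j * n ≤ m * k then k else 0)
        = (n - 1) * n - n * j / m * (n * j / m + 1) := by
    intro j hj
    rw [mul_comm n j]
    simp only [mem_Ioc] at hj
    have hndvd : ¬ m ∣ j * n := fun hd => by
      have := Int.le_of_dvd hj.1 (h.dvd_of_dvd_mul_right hd)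
      omega
    have hfilter : (Ioc 0 (n - 1)).filter (fun k => j * n ≤ m * k) = Ioc (j * n / m) (n - 1) := by
      ext k
      have hne : j * n ≠ m * k := fun he => hndvd ⟨k, he⟩
      have h0 : 0 ≤ j * n / m := Int.ediv_nonneg (by nlinarith) hm.le
      simp only [mem_filter, mem_Ioc, Int.ediv_lt_iff_lt_mul hm]
      constructor
      · rintro ⟨⟨_, hk⟩, hle⟩
        exact ⟨by rw [mul_comm k]; omega, hk⟩
      · rintro ⟨hlt, hk⟩
        have : j * n < m * k := by rwa [mul_comm m]
        refine ⟨⟨?_, hk⟩, this.le⟩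
        nlinarith
    have hfloor : j * n / m ≤ n - 1 := by
      have : j * n / m < n := Int.ediv_lt_of_lt_mul hm (by nlinarith)
      omega
    rw [← sum_filter, hfilter, two_mul_sum_Ioc_id hfloor]
    ring
  rw [sum_congr rfl hcount, sum_comm, mul_sum, sum_congr rfl hcolumn, sum_sub_distrib, sum_const,
    Int.card_Ioc, nsmul_eq_mul, show (((m - 1 - 0).toNat : ℕ) : ℤ) = m - 1 by omega]
  ring

theorem mul_sum_Ioc_ediv {m n : ℤ} (hm : 0 < m) (h : IsCoprime n m) :
    m * ∑ j ∈ Ioc 0 (m - 1), n * j / m = (n - 1) * ∑ j ∈ Ioc 0 (m - 1), j := by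
  have hres : ∑ j ∈ Ioc 0 (m - 1), n * j % m = ∑ j ∈ Ioc 0 (m - 1), j :=
    sum_Ioc_emod_mul hm h (fun x => x)
  rw [mul_sum, sum_congr rfl fun j _ => eq_sub_of_add_eq (Int.mul_ediv_add_emod (n * j) m),
    sum_sub_distrib, ← mul_sum, hres]
  ring

theorem sq_mul_sum_Ioc_ediv_sq {m n : ℤ} (hm : 0 < m) (h : IsCoprime n m) :
    m ^ 2 * ∑ j ∈ Ioc 0 (m - 1), (n * j / m) ^ 2
      = (n ^ 2 + 1) * ∑ j ∈ Ioc 0 (m - 1), j ^ 2 - 2 * n * residueMoment n m := by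
  have hres : ∑ j ∈ Ioc 0 (m - 1), (n * j % m) ^ 2 = ∑ j ∈ Ioc 0 (m - 1), j ^ 2 :=
    sum_Ioc_emod_mul hm h (fun x => x ^ 2)
  have hterm : ∀ j ∈ Ioc 0 (m - 1), m ^ 2 * (n * j / m) ^ 2
      = n ^ 2 * j ^ 2 - 2 * n * (j * (n * j % m)) + (n * j % m) ^ 2 := fun j _ => by
    linear_combination (m * (n * j / m) + n * j - n * j % m) * Int.mul_ediv_add_emod (n * j) m
  rw [mul_sum, sum_congr rfl hterm, sum_add_distrib, sum_sub_distrib, ← mul_sum, ← mul_sum, hres,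
    residueMoment]
  ring

theorem residueMoment_reciprocity {m n : ℤ} (hm : 0 < m) (hn : 0 < n) (h : IsCoprime m n) :
    12 * m ^ 2 * residueMoment m n + 12 * n ^ 2 * residueMoment n m
      = 3 * m ^ 2 * n ^ 2 * (m + n - 3) + m * n * (m ^ 2 + n ^ 2 + 1) := by
  have hsq := six_mul_sum_Ioc_sq (show 0 ≤ n - 1 by omega)
  have hsq' := six_mul_sum_Ioc_sq (show 0 ≤ m - 1 by omega)
  have hid' := two_mul_sum_Ioc_id (show 0 ≤ m - 1 by omega)
  have hfloor := sq_mul_sum_Ioc_ediv_sq hm h.symm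
  have hfloor' := mul_sum_Ioc_ediv hm h.symm
  have htriangle : ∑ j ∈ Ioc 0 (m - 1), n * j / m * (n * j / m + 1)
      = ∑ j ∈ Ioc 0 (m - 1), (n * j / m) ^ 2 + ∑ j ∈ Ioc 0 (m - 1), n * j / m := by
    rw [← sum_add_distrib]
    exact sum_congr rfl fun _ _ => by ring
  linear_combination (12 * m ^ 2) * residueMoment_add_mul_sum_mul_ediv m n
    - (6 * m ^ 2 * n) * two_mul_sum_mul_ediv_add_sum hm hn h + (6 * n) * hfloor
    + (6 * n * m) * hfloor' + (2 * m ^ 3) * hsq + (n * (n ^ 2 + 1)) * hsq'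
    + (3 * n * m * (n - 1)) * hid' + (6 * m ^ 2 * n) * htriangle

theorem S_add_S_swap {m n : ℤ} (hm : 0 < m) (hn : 0 < n) (h : IsCoprime m n) :
    S m n + S n m = m / n + n / m + 1 / (m * n) - 3 := by
  have hmq : (m : ℚ) ≠ 0 := by exact_mod_cast hm.ne'
  have hnq : (n : ℚ) ≠ 0 := by exact_mod_cast hn.ne'
  have hR : (12 * m ^ 2 * residueMoment m n + 12 * n ^ 2 * residueMoment n m : ℚ)
      = 3 * m ^ 2 * n ^ 2 * (m + n - 3) + m * n * (m ^ 2 + n ^ 2 + 1) := by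
    exact_mod_cast residueMoment_reciprocity hm hn h
  rw [S, S, dedekindSum_eq_residueMoment hn h, dedekindSum_eq_residueMoment hm h.symm]
  field_simp
  linear_combination 4 * hR

theorem S_add_mul (m n t : ℤ) : S (m + n * t) n = S m n := by
  refine congrArg (12 * ·) (sum_congr rfl fun k hk => congrArg _ ?_)
  have hn : (n : ℚ) ≠ 0 := by
    have := (mem_Icc.1 hk).1.trans (mem_Icc.1 hk).2
    exact_mod_cast (show n ≠ 0 by omega)
  have hsplit : ((m + n * t : ℤ) : ℚ) * k / n = (m : ℚ) * k / n + ((t * k : ℤ) : ℚ) := by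
    push_cast
    field_simp
  rw [hsplit, saw_add_intCast]

theorem S_one_right (m : ℤ) : S m 1 = 0 := by
  simp [S, dedekindSum, saw]

theorem exists_S_eq_add_intCast {a d c : ℤ} (hc : 0 < c) (h : c ∣ a * d - 1) :
    ∃ z : ℤ, S d c = (a + d) / c + z := by
  obtain rfl | hc1 := (show c = 1 ∨ 1 < c by omega)
  · exact ⟨-(a + d), by rw [S_one_right]; push_cast; ring⟩
  obtain ⟨t, r, hd, hr0, hrc⟩ : ∃ t r, d = r + c * t ∧ 0 ≤ r ∧ r < c :=
    ⟨d / c, d % c, by linear_combination -Int.mul_ediv_add_emod d c,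
      Int.emod_nonneg d hc.ne', Int.emod_lt_of_pos d hc⟩
  subst hd
  obtain ⟨k, hk⟩ : c ∣ a * r - 1 := by
    have := dvd_sub h (dvd_mul_right c (a * t))
    rwa [show a * (r + c * t) - 1 - c * (a * t) = a * r - 1 by ring] at this
  have hr : 0 < r := by
    refine lt_of_le_of_ne hr0 fun h0 => ?_
    subst h0
    have := Int.eq_one_of_dvd_one (a := c) hc.le ⟨-k, by linear_combination -hk⟩
    omega
  -- `c * (-k) ≡ 1 [ZMOD r]`, so `S c r` is covered by the induction on `c`
  obtain ⟨z, hz⟩ := exists_S_eq_add_intCast (a := -k) (d := c) hr ⟨-a, by linear_combination hk⟩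
  have hrec := S_add_S_swap hr hc ⟨a, -k, by linear_combination hk⟩
  have hSr : S r c = r / c + k / r + 1 / (r * c) - 3 - z := by
    push_cast at hz
    linear_combination hrec - hz
  have hcq : (c : ℚ) ≠ 0 := by exact_mod_cast hc.ne'
  have hrq : (r : ℚ) ≠ 0 := by exact_mod_cast hr.ne'
  have hkq : (c : ℚ) * k = a * r - 1 := by exact_mod_cast hk.symm
  refine ⟨-3 - z - t, ?_⟩
  rw [S_add_mul, hSr]
  push_cast
  field_simp
  linear_combination hkq
termination_by c.toNat
decreasing_by omega

theorem stmt7 (n q : ℤ) (hn : 1 ≤ n) (hq1 : 0 ≤ q) (hq2 : q ≤ n - 1)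
    (hgcd : Int.gcd q n = 1) :
    ∃ m n' : ℤ, 1 ≤ n' ∧ 0 ≤ m ∧ m ≤ n' - 1 ∧ Int.gcd m n' = 1 ∧
      ∃ z : ℤ, S m n' - (q : ℚ) / (n : ℚ) = z := by
  obtain ⟨u, v, huv⟩ := Int.isCoprime_iff_gcd_eq_one.mpr hgcd
  obtain ⟨a, ha0, han, s, hs⟩ : ∃ a, 0 ≤ a ∧ a < n ∧ ∃ s, a * q - 1 = n * s :=
    ⟨u % n, Int.emod_nonneg u (by omega), Int.emod_lt_of_pos u (by omega), -v - u / n * q,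
      by linear_combination huv + q * Int.mul_ediv_add_emod u n⟩
  have haq : a ≤ (a ^ 2 + 1) * q := by
    rcases hq1.eq_or_lt with rfl | hq
    · have := Int.eq_one_of_dvd_one (a := n) (by omega) ⟨-s, by linear_combination -hs⟩
      omega
    · nlinarith [sq_nonneg (a - 1),
        mul_le_mul_of_nonneg_left (show 1 ≤ q by omega) (by positivity : (0 : ℤ) ≤ a ^ 2 + 1)]
  have hinv : (a ^ 2 + 1) * n ∣ a * ((a ^ 2 + 1) * q - a) - 1 :=
    ⟨s, by linear_combination (a ^ 2 + 1) * hs⟩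
  obtain ⟨z, hz⟩ := exists_S_eq_add_intCast (by positivity) hinv
  refine ⟨(a ^ 2 + 1) * q - a, (a ^ 2 + 1) * n, by nlinarith, by linarith, by nlinarith,
    Int.isCoprime_iff_gcd_eq_one.mp ⟨a, -s, by linear_combination hs * (a ^ 2 + 1)⟩, z, ?_⟩
  have hnq : (n : ℚ) ≠ 0 := by exact_mod_cast (show n ≠ 0 by omega)
  rw [hz]
  push_cast
  field_simp
  ring
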